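/- arXiv:1809.07074 — 2 statements merged into one kernel-verified Lean document; each statement's English description precedes it below -/
import Mathlib

section
/- Fix integers m ≥ 1, n ≥ 1 and t = (t_1,…,t_{2m}) ∈ ℝ^{2m−1}×(0,∞). Then the function λ ↦ ln Z_n(λ;t) is differentiable on ℝ and, for every λ ∈ ℝ, d/dλ ln Z_n(λ;t) = 4n · 𝔭_1(n;λ,t), where 𝔭_1(n;λ,t) is the coefficient of x^{n−1} in the monic orthogonal polynomial π_n(·;λ,t). -/
open MeasureTheory Filter Set

noncomputable section

/-- The potential `V(x;λ,t) = 2x² + Σ_{k=1}^{2m} t_k (x−λ)^{−k}`. -/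
def Vpot (m : ℕ) (lam : ℝ) (t : ℕ → ℝ) (x : ℝ) : ℝ :=
  2 * x ^ 2 + ∑ k ∈ Finset.Icc 1 (2 * m), t k * (x - lam) ^ (-(k : ℤ))

/-- The weight `w_n(x;λ,t) = e^{−n V(x;λ,t)}`, extended by `0` at `x = λ`. -/
def wfun (m n : ℕ) (lam : ℝ) (t : ℕ → ℝ) (x : ℝ) : ℝ :=
  if x = lam then 0 else Real.exp (-(n : ℝ) * Vpot m lam t x)

/-- The partition function `Z_n(λ;t)`. -/
def Zn (m n : ℕ) (lam : ℝ) (t : ℕ → ℝ) : ℝ :=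
  ∫ x : Fin n → ℝ,
    (∏ i : Fin n, ∏ j : Fin n, if i < j then (x j - x i) ^ 2 else 1) *
      ∏ j : Fin n, wfun m n lam t (x j)

/-- For each `λ`, `P λ j` is the monic orthogonal polynomial of degree `j` with respect to the
weight `w_n(·;λ,t)`, with `∫ π_j π_k w_n = γ_j(λ;t)^{−2} δ_{jk}` and `γ_j(λ;t) > 0`. -/
def orthoFam (m n : ℕ) (t : ℕ → ℝ) (P : ℝ → ℕ → Polynomial ℝ) (γ : ℝ → ℕ → ℝ) : Prop :=
  (∀ lam j, (P lam j).Monic) ∧ (∀ lam j, (P lam j).natDegree = j) ∧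
  (∀ lam j, 0 < γ lam j) ∧
  (∀ lam j k, (∫ x : ℝ, (P lam j).eval x * (P lam k).eval x * wfun m n lam t x)
      = if j = k then (γ lam j) ^ (-(2 : ℤ)) else 0)

/-!
Heine's formula: write the squared Vandermonde determinant as `det [π_i(x_j)]²` and expand both
determinants; the integral over `ℝⁿ` then factorises coordinatewise and orthogonality keeps only the
diagonal terms. This gives `Z_n = n! ∏_{j<n} γ_j⁻²` and, because
`∫ x π_j² w_n = (𝔭_1(j) - 𝔭_1(j+1)) γ_j⁻²`, also `∫ (Σ_k x_k) Δ² ∏ w_n = -𝔭_1(n) Z_n` by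
telescoping.

On the other hand, the translation `x ↦ x + λ` moves all the `λ`-dependence of the integrand of
`Z_n` into the Gaussian factor `e^{-2n Σ_k (x_k + λ)²}`, while the remaining pole factor
`e^{-n Σ t_k x^{-k}}` is bounded, since `Σ t_k v^k` has even degree `2m` and positive leading
coefficient. Differentiating under the integral sign gives
`Z_n' = -4n ∫ (Σ_k x_k) Δ² ∏ w_n = 4n 𝔭_1(n) Z_n`, and `Z_n > 0`.
-/

open Polynomial
open scoped Nat

lemma Polynomial.coeff_eq_nextCoeff {R : Type*} [Semiring R] {p : R[X]} {j : ℕ}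
    (h : p.natDegree = j + 1) : p.coeff j = p.nextCoeff := by
  rw [nextCoeff_of_natDegree_pos (by omega), h, Nat.add_sub_cancel]

lemma prod_eval_ite_X_one {n : ℕ} (k : Fin n) (x : Fin n → ℝ) :
    ∏ i, (if i = k then X else 1 : ℝ[X]).eval (x i) = x k := by
  simp [apply_ite]

lemma Equiv.Perm.exists_ne_apply_ne_of_ne {α : Type*} {σ τ : Equiv.Perm α} (h : σ ≠ τ) (k : α) :
    ∃ i ≠ k, σ i ≠ τ i := by
  by_contra! hc
  refine h (Equiv.ext fun i => ?_)
  by_cases hi : i = k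
  · subst hi
    by_contra hne
    have hj : σ.symm (τ i) ≠ i := fun hj => hne (by rw [← hj, σ.apply_symm_apply, hj])
    exact hj (τ.injective (by rw [← hc _ hj, σ.apply_symm_apply]))
  · exact hc i hi

lemma sum_sign_mul_sign_mul_eq_sum_diag {α R : Type*} [Fintype α] [DecidableEq α] [CommRing R]
    (f : Equiv.Perm α → Equiv.Perm α → R) (hf : ∀ σ τ, σ ≠ τ → f σ τ = 0) :
    ∑ σ, ∑ τ, ((Equiv.Perm.sign σ : ℤ) : R) * ((Equiv.Perm.sign τ : ℤ) : R) * f σ τ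
      = ∑ σ, f σ σ := by
  refine Finset.sum_congr rfl fun σ _ => ?_
  rw [Fintype.sum_eq_single σ fun τ h => by rw [hf σ τ h.symm, mul_zero], ← Int.cast_mul,
    ← Units.val_mul, Int.units_mul_self, Units.val_one, Int.cast_one, one_mul]

def vandermondeSq {n : ℕ} (x : Fin n → ℝ) : ℝ :=
  ∏ i : Fin n, ∏ j : Fin n, if i < j then (x j - x i) ^ 2 else 1

lemma vandermondeSq_eq_det_sq {n : ℕ} (x : Fin n → ℝ) :
    vandermondeSq x = (Matrix.vandermonde x).det ^ 2 := by
  rw [Matrix.det_vandermonde, ← Finset.prod_pow, vandermondeSq]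
  refine Finset.prod_congr rfl fun i _ => ?_
  rw [← Finset.prod_pow, ← Finset.prod_filter]
  congr 1
  ext j; simp

lemma vandermondeSq_add_const {n : ℕ} (x : Fin n → ℝ) (a : ℝ) :
    vandermondeSq (x + fun _ => a) = vandermondeSq x := by
  rw [vandermondeSq_eq_det_sq, vandermondeSq_eq_det_sq]
  exact congrArg (· ^ 2) (Matrix.det_vandermonde_add x a)

lemma vandermondeSq_nonneg {n : ℕ} (x : Fin n → ℝ) : 0 ≤ vandermondeSq x :=
  Finset.prod_nonneg fun _ _ => Finset.prod_nonneg fun _ _ => by split_ifs <;> positivity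

lemma continuous_vandermondeSq {n : ℕ} : Continuous (vandermondeSq (n := n)) := by
  refine continuous_finsetProd _ fun i _ => continuous_finsetProd _ fun j _ => ?_
  split_ifs <;> fun_prop

lemma vandermondeSq_le {n : ℕ} (y : Fin n → ℝ) :
    vandermondeSq y ≤ 4 ^ (n * n) * Real.exp (n * ∑ j, y j ^ 2) := by
  have hfac : ∀ i j : Fin n, (if i < j then (y j - y i) ^ 2 else 1)
      ≤ 4 * Real.exp ((y i ^ 2 + y j ^ 2) / 2) := by
    intro i j
    have h1 := Real.add_one_le_exp ((y i ^ 2 + y j ^ 2) / 2)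
    split_ifs
    · nlinarith [sq_nonneg (y i + y j)]
    · nlinarith [sq_nonneg (y i), sq_nonneg (y j)]
  calc vandermondeSq y ≤ ∏ i : Fin n, ∏ j : Fin n, 4 * Real.exp ((y i ^ 2 + y j ^ 2) / 2) :=
        Finset.prod_le_prod (fun _ _ => Finset.prod_nonneg fun _ _ => by split_ifs <;> positivity)
          fun i _ => Finset.prod_le_prod (fun _ _ => by split_ifs <;> positivity)
            fun j _ => hfac i j
    _ = 4 ^ (n * n) * Real.exp (n * ∑ j, y j ^ 2) := by
      simp only [Finset.prod_mul_distrib, Finset.prod_const, Finset.card_univ, Fintype.card_fin,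
        ← Real.exp_sum, ← pow_mul]
      congr 2
      simp only [add_div, Finset.sum_add_distrib, Finset.sum_const, Finset.card_univ,
        Fintype.card_fin, nsmul_eq_mul, ← Finset.sum_div, ← Finset.mul_sum]
      ring

/-! ### Heine's formulas -/

structure IsMonicOrthogonal (w : ℝ → ℝ) (P : ℕ → ℝ[X]) (N : ℕ → ℝ) : Prop where
  monic : ∀ j, (P j).Monic
  natDegree_eq : ∀ j, (P j).natDegree = j
  ne_zero : ∀ j, N j ≠ 0
  integral_eq : ∀ j k, ∫ x, (P j).eval x * (P k).eval x * w x = if j = k then N j else 0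

namespace IsMonicOrthogonal

variable {w : ℝ → ℝ} {P : ℕ → ℝ[X]} {N : ℕ → ℝ}

def toSequence (hP : IsMonicOrthogonal w P N) : Polynomial.Sequence ℝ where
  elems' := P
  degree_eq' j := by rw [degree_eq_natDegree (hP.monic j).ne_zero, hP.natDegree_eq]

lemma coeff_self (hP : IsMonicOrthogonal w P N) (j : ℕ) : (P j).coeff j = 1 := by
  simpa [hP.natDegree_eq j] using (hP.monic j).coeff_natDegree

lemma integral_self (hP : IsMonicOrthogonal w P N) (j : ℕ) :
    ∫ x, (P j).eval x * (P j).eval x * w x = N j := by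
  simpa using hP.integral_eq j j

lemma integral_of_ne (hP : IsMonicOrthogonal w P N) {j k : ℕ} (h : j ≠ k) :
    ∫ x, (P j).eval x * (P k).eval x * w x = 0 := by
  simpa [h] using hP.integral_eq j k

lemma integrable_self (hP : IsMonicOrthogonal w P N) (j : ℕ) :
    Integrable fun x => (P j).eval x * (P j).eval x * w x := by
  by_contra h
  exact hP.ne_zero j (by rw [← hP.integral_self, integral_undef h])

lemma aestronglyMeasurable (hP : IsMonicOrthogonal w P N) : AEStronglyMeasurable w := by
  have h0 : P 0 = 1 := (Monic.natDegree_eq_zero (hP.monic 0)).mp (hP.natDegree_eq 0)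
  simpa [h0] using (hP.integrable_self 0).aestronglyMeasurable

lemma integrable_mul (hP : IsMonicOrthogonal w P N) (hw : 0 ≤ w) (j k : ℕ) :
    Integrable fun x => (P j).eval x * (P k).eval x * w x := by
  refine (((hP.integrable_self j).fun_add (hP.integrable_self k)).const_mul (1 / 2)).mono'
    (((P j).continuous.mul (P k).continuous).aestronglyMeasurable.mul
      hP.aestronglyMeasurable) (Eventually.of_forall fun x => ?_)
  rw [Real.norm_eq_abs, abs_mul, abs_mul, abs_of_nonneg (hw x)]
  have key := mul_nonneg (sq_nonneg (|(P j).eval x| - |(P k).eval x|)) (hw x)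
  rw [sub_sq, sq_abs, sq_abs] at key
  linarith

lemma integrable_eval_mul (hP : IsMonicOrthogonal w P N) (hw : 0 ≤ w) (r : ℝ[X]) (j : ℕ) :
    Integrable fun x => r.eval x * (P j).eval x * w x := by
  have hr : r ∈ Submodule.span ℝ (Set.range hP.toSequence) := by
    rw [hP.toSequence.span fun i => by simp [toSequence, (hP.monic i).leadingCoeff]]
    trivial
  induction hr using Submodule.span_induction with
  | mem r hr =>
    obtain ⟨i, rfl⟩ := hr
    exact hP.integrable_mul hw i j
  | zero => simp
  | add r s _ _ hr hs => simpa [add_mul] using hr.fun_add hs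
  | smul c r _ hr => simpa [mul_assoc] using hr.const_mul c

lemma integral_eval_mul_eq_zero (hP : IsMonicOrthogonal w P N) (hw : 0 ≤ w) {r : ℝ[X]} {j : ℕ}
    (hr : r.degree < j) : ∫ x, r.eval x * (P j).eval x * w x = 0 := by
  let L : ℝ[X] →ₗ[ℝ] ℝ :=
    { toFun := fun r => ∫ x, r.eval x * (P j).eval x * w x
      map_add' := fun r s => by
        simpa [add_mul] using integral_add (hP.integrable_eval_mul hw r j)
          (hP.integrable_eval_mul hw s j)
      map_smul' := fun c r => by simpa [mul_assoc] using integral_const_mul c _ }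
  have hspan : degreeLT ℝ j ≤ LinearMap.ker L := by
    rw [← hP.toSequence.span_degreeLT fun i _ => by simp [toSequence, (hP.monic i).leadingCoeff],
      Submodule.span_le]
    rintro _ ⟨i, hi, rfl⟩
    exact hP.integral_of_ne (Nat.ne_of_lt hi)
  exact hspan (mem_degreeLT.mpr hr)

lemma integral_eval_mul_of_natDegree_le (hP : IsMonicOrthogonal w P N) (hw : 0 ≤ w) {r : ℝ[X]}
    {j : ℕ} (hr : r.natDegree ≤ j) : ∫ x, r.eval x * (P j).eval x * w x = r.coeff j * N j := by
  set s := r - C (r.coeff j) * P j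
  have hs : s.degree < j := by
    rw [degree_lt_iff_coeff_zero]
    intro i hi
    rcases hi.eq_or_lt with rfl | hi
    · simp [s, hP.coeff_self]
    · simp [s, coeff_eq_zero_of_natDegree_lt (hr.trans_lt hi),
        coeff_eq_zero_of_natDegree_lt ((hP.natDegree_eq j).trans_lt hi)]
  have hsplit : ∀ x, r.eval x * (P j).eval x * w x
      = r.coeff j * ((P j).eval x * (P j).eval x * w x) + s.eval x * (P j).eval x * w x := by
    intro x; simp only [s, eval_sub, eval_mul, eval_C]; ring
  simp_rw [hsplit]
  rw [integral_add ((hP.integrable_self j).const_mul _) (hP.integrable_eval_mul hw s j),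
    integral_const_mul, hP.integral_self, hP.integral_eval_mul_eq_zero hw hs, add_zero]

-- `nextCoeff` is the paper's `𝔭_1`, and `𝔭_1(j) - 𝔭_1(j+1)` is the coefficient of `π_j` in the
-- three-term recurrence for `x π_j`.
lemma integral_mul_X (hP : IsMonicOrthogonal w P N) (hw : 0 ≤ w) (j : ℕ) :
    ∫ x, (X * P j).eval x * (P j).eval x * w x
      = ((P j).nextCoeff - (P (j + 1)).nextCoeff) * N j := by
  set s := X * P j - P (j + 1)
  have hs : s.natDegree ≤ j := by
    rw [natDegree_le_iff_coeff_eq_zero]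
    rintro k hk
    obtain ⟨i, rfl⟩ : ∃ i, k = i + 1 := ⟨k - 1, by omega⟩
    rcases (Nat.le_of_lt_succ hk).eq_or_lt with rfl | hji
    · simp [s, coeff_X_mul, hP.coeff_self]
    · simp [s, coeff_X_mul, coeff_eq_zero_of_natDegree_lt ((hP.natDegree_eq _).trans_lt hji),
        coeff_eq_zero_of_natDegree_lt ((hP.natDegree_eq (j + 1)).trans_lt (Nat.succ_lt_succ hji))]
  have hsj : s.coeff j = (P j).nextCoeff - (P (j + 1)).nextCoeff := by
    rw [coeff_sub, coeff_eq_nextCoeff (p := X * P j), coeff_eq_nextCoeff (hP.natDegree_eq _),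
      monic_X.nextCoeff_mul (hP.monic j)]
    · simp [nextCoeff]
    · rw [natDegree_X_mul (hP.monic j).ne_zero, hP.natDegree_eq]
  have hsplit : ∀ x, (X * P j).eval x * (P j).eval x * w x
      = s.eval x * (P j).eval x * w x + (P (j + 1)).eval x * (P j).eval x * w x := by
    intro x; simp only [s, eval_sub, eval_mul, eval_X]; ring
  simp_rw [hsplit]
  rw [integral_add (hP.integrable_eval_mul hw s j) (hP.integrable_mul hw (j + 1) j),
    hP.integral_eval_mul_of_natDegree_le hw hs, hP.integral_of_ne (by omega), hsj, add_zero]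

variable {n : ℕ}

lemma vandermondeSq_eq_det_eval_sq (hP : IsMonicOrthogonal w P N) (x : Fin n → ℝ) :
    vandermondeSq x = (Matrix.of fun i j : Fin n => (P i).eval (x j)).det ^ 2 := by
  rw [vandermondeSq_eq_det_sq, Matrix.det_eval_matrixOfPolynomials_eq_det_vandermonde x
    (fun j : Fin n => P j) (fun j => hP.natDegree_eq j) (fun j => hP.monic j),
    ← Matrix.det_transpose]
  rfl

lemma prod_eval_mul_vandermondeSq_mul_prod (hP : IsMonicOrthogonal w P N) (q : Fin n → ℝ[X])
    (x : Fin n → ℝ) :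
    (∏ i, (q i).eval (x i)) * (vandermondeSq x * ∏ i, w (x i))
      = ∑ σ : Equiv.Perm (Fin n), ∑ τ : Equiv.Perm (Fin n),
          ((Equiv.Perm.sign σ : ℤ) : ℝ) * ((Equiv.Perm.sign τ : ℤ) : ℝ) *
            ∏ i, (q i * P (σ i)).eval (x i) * (P (τ i)).eval (x i) * w (x i) := by
  rw [hP.vandermondeSq_eq_det_eval_sq, sq, Matrix.det_apply', Finset.sum_mul_sum,
    Finset.sum_mul, Finset.mul_sum]
  refine Finset.sum_congr rfl fun σ _ => ?_
  rw [Finset.sum_mul, Finset.mul_sum]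
  refine Finset.sum_congr rfl fun τ _ => ?_
  simp only [Matrix.of_apply, eval_mul, Finset.prod_mul_distrib]
  ring

lemma integrable_prod_eval_mul (hP : IsMonicOrthogonal w P N) (hw : 0 ≤ w)
    (q : Fin n → ℝ[X]) (σ τ : Fin n → ℕ) :
    Integrable fun x : Fin n → ℝ =>
      ∏ i, (q i * P (σ i)).eval (x i) * (P (τ i)).eval (x i) * w (x i) :=
  Integrable.fintype_prod fun _ => hP.integrable_eval_mul hw _ _

lemma integrable_prod_eval_mul_vandermondeSq_mul_prod (hP : IsMonicOrthogonal w P N)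
    (hw : 0 ≤ w) (q : Fin n → ℝ[X]) :
    Integrable fun x : Fin n → ℝ => (∏ i, (q i).eval (x i)) * (vandermondeSq x * ∏ i, w (x i)) := by
  simp_rw [hP.prod_eval_mul_vandermondeSq_mul_prod]
  exact integrable_finsetSum _ fun σ _ => integrable_finsetSum _ fun τ _ =>
    (hP.integrable_prod_eval_mul hw q _ _).const_mul _

lemma integral_prod_eval_mul_vandermondeSq_mul_prod (hP : IsMonicOrthogonal w P N)
    (hw : 0 ≤ w) (q : Fin n → ℝ[X]) :
    ∫ x : Fin n → ℝ, (∏ i, (q i).eval (x i)) * (vandermondeSq x * ∏ i, w (x i))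
      = ∑ σ : Equiv.Perm (Fin n), ∑ τ : Equiv.Perm (Fin n),
          ((Equiv.Perm.sign σ : ℤ) : ℝ) * ((Equiv.Perm.sign τ : ℤ) : ℝ) *
            ∏ i, ∫ y, (q i * P (σ i)).eval y * (P (τ i)).eval y * w y := by
  simp_rw [hP.prod_eval_mul_vandermondeSq_mul_prod]
  rw [integral_finsetSum _ fun σ _ => integrable_finsetSum _ fun τ _ =>
    (hP.integrable_prod_eval_mul hw q _ _).const_mul _]
  refine Finset.sum_congr rfl fun σ _ => ?_
  rw [integral_finsetSum _ fun τ _ => (hP.integrable_prod_eval_mul hw q _ _).const_mul _]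
  refine Finset.sum_congr rfl fun τ _ => ?_
  rw [integral_const_mul, integral_fintype_prod_volume_eq_prod
    (fun i y => (q i * P (σ i)).eval y * (P (τ i)).eval y * w y)]

theorem integral_vandermondeSq_mul_prod (hP : IsMonicOrthogonal w P N) (hw : 0 ≤ w) :
    ∫ x : Fin n → ℝ, vandermondeSq x * ∏ i, w (x i) = n ! * ∏ i : Fin n, N i := by
  have h := hP.integral_prod_eval_mul_vandermondeSq_mul_prod hw (1 : Fin n → ℝ[X])
  simp only [Pi.one_apply, eval_one, Finset.prod_const_one, one_mul] at h
  rw [h, sum_sign_mul_sign_mul_eq_sum_diag]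
  · simp_rw [hP.integral_self, Equiv.prod_comp _ fun i : Fin n => N i]
    simp [Fintype.card_perm]
  · intro σ τ hστ
    obtain ⟨i, hi⟩ : ∃ i, σ i ≠ τ i := not_forall.mp fun h => hστ (Equiv.ext h)
    exact Finset.prod_eq_zero (Finset.mem_univ i) (hP.integral_of_ne (by simpa [Fin.val_inj]))

lemma integrable_coord_mul_vandermondeSq_mul_prod (hP : IsMonicOrthogonal w P N) (hw : 0 ≤ w)
    (k : Fin n) : Integrable fun x : Fin n → ℝ => x k * (vandermondeSq x * ∏ i, w (x i)) := by
  simpa only [prod_eval_ite_X_one] using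
    hP.integrable_prod_eval_mul_vandermondeSq_mul_prod hw fun i => if i = k then X else 1

lemma integral_coord_mul_vandermondeSq_mul_prod (hP : IsMonicOrthogonal w P N) (hw : 0 ≤ w)
    (k : Fin n) :
    ∫ x : Fin n → ℝ, x k * (vandermondeSq x * ∏ i, w (x i))
      = ∑ σ : Equiv.Perm (Fin n),
          ((P (σ k)).nextCoeff - (P (σ k + 1)).nextCoeff) * ∏ i : Fin n, N i := by
  have h := hP.integral_prod_eval_mul_vandermondeSq_mul_prod hw fun i => if i = k then X else 1
  simp only [prod_eval_ite_X_one] at h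
  rw [h, sum_sign_mul_sign_mul_eq_sum_diag]
  · refine Finset.sum_congr rfl fun σ _ => ?_
    have hfac : ∀ i, ∫ y, ((if i = k then X else 1) * P (σ i)).eval y * (P (σ i)).eval y * w y
        = (if i = k then (P (σ k)).nextCoeff - (P (σ k + 1)).nextCoeff else 1) * N (σ i) := by
      intro i
      by_cases hi : i = k
      · subst hi; simpa using hP.integral_mul_X hw (σ i)
      · simp [hi, hP.integral_self]
    rw [Finset.prod_congr rfl fun i _ => hfac i, Finset.prod_mul_distrib, Finset.prod_ite_eq',
      if_pos (Finset.mem_univ k), Equiv.prod_comp σ fun i : Fin n => N i]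
  · intro σ τ hστ
    obtain ⟨i, hik, hi⟩ := Equiv.Perm.exists_ne_apply_ne_of_ne hστ k
    refine Finset.prod_eq_zero (Finset.mem_univ i) ?_
    simpa [hik] using hP.integral_of_ne (by simpa [Fin.val_inj])

theorem integral_sum_mul_vandermondeSq_mul_prod (hP : IsMonicOrthogonal w P N) (hw : 0 ≤ w) :
    ∫ x : Fin n → ℝ, (∑ k, x k) * (vandermondeSq x * ∏ i, w (x i))
      = -(P n).nextCoeff * (n ! * ∏ i : Fin n, N i) := by
  have htelescope : ∀ σ : Equiv.Perm (Fin n),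
      ∑ k, ((P (σ k)).nextCoeff - (P (σ k + 1)).nextCoeff) = -(P n).nextCoeff := by
    intro σ
    rw [Equiv.sum_comp σ fun k : Fin n => (P k).nextCoeff - (P (k + 1)).nextCoeff,
      Fin.sum_univ_eq_sum_range (fun j => (P j).nextCoeff - (P (j + 1)).nextCoeff),
      Finset.sum_range_sub']
    simp [nextCoeff, hP.natDegree_eq 0]
  simp_rw [Finset.sum_mul]
  rw [integral_finsetSum _ fun k _ => hP.integrable_coord_mul_vandermondeSq_mul_prod hw k]
  simp_rw [hP.integral_coord_mul_vandermondeSq_mul_prod hw]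
  rw [Finset.sum_comm]
  simp_rw [← Finset.sum_mul, htelescope]
  simp [Fintype.card_perm]
  ring

end IsMonicOrthogonal

/-! ### Differentiating Gaussian translates -/

lemma mul_sq_sub_mul_add_sq_le {a b Λ l : ℝ} (ha : 0 < a) (hab : b < a) (hl : |l| ≤ Λ) (u : ℝ) :
    b * u ^ 2 - a * (u + l) ^ 2 + (|u| + Λ)
      ≤ -((a - b) / 2) * u ^ 2 + (Λ + (2 * a * Λ + 1) ^ 2 / (2 * (a - b))) := by
  have hc : 0 < a - b := sub_pos.mpr hab
  have hul : -(|u| * Λ) ≤ u * l := by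
    have := neg_abs_le (u * l)
    rw [abs_mul] at this
    nlinarith [abs_nonneg u]
  have hsq :
      (2 * a * Λ + 1) * |u| ≤ (a - b) / 2 * u ^ 2 + (2 * a * Λ + 1) ^ 2 / (2 * (a - b)) := by
    have h := div_nonneg (sq_nonneg ((a - b) * |u| - (2 * a * Λ + 1)))
      (by positivity : 0 ≤ 2 * (a - b))
    have e : ((a - b) * |u| - (2 * a * Λ + 1)) ^ 2 / (2 * (a - b))
        = (a - b) / 2 * u ^ 2 - (2 * a * Λ + 1) * |u| + (2 * a * Λ + 1) ^ 2 / (2 * (a - b)) := by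
      field_simp
      rw [← sq_abs u]
      ring
    linarith
  nlinarith [sq_nonneg l]

lemma exp_mul_exp_mul_exp_le_prod {n : ℕ} {a b Λ l : ℝ} (ha : 0 < a) (hab : b < a) (hl : |l| ≤ Λ)
    (y : Fin n → ℝ) :
    Real.exp (b * ∑ j, y j ^ 2) * Real.exp (-a * ∑ j, (y j + l) ^ 2) * Real.exp (∑ j, (|y j| + Λ))
      ≤ ∏ j, Real.exp (-((a - b) / 2) * y j ^ 2 + (Λ + (2 * a * Λ + 1) ^ 2 / (2 * (a - b)))) := by
  rw [← Real.exp_add, ← Real.exp_add, ← Real.exp_sum, Real.exp_le_exp, Finset.mul_sum,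
    Finset.mul_sum, ← Finset.sum_add_distrib, ← Finset.sum_add_distrib]
  exact Finset.sum_le_sum fun j _ => by linarith [mul_sq_sub_mul_add_sq_le ha hab hl (y j)]

lemma integrable_prod_exp_neg_mul_sq_add {n : ℕ} {c : ℝ} (hc : 0 < c) (D : ℝ) :
    Integrable fun y : Fin n → ℝ => ∏ j, Real.exp (-c * y j ^ 2 + D) := by
  have h1 : Integrable fun u : ℝ => Real.exp (-c * u ^ 2 + D) := by
    simpa [Real.exp_add, mul_comm] using (integrable_exp_neg_mul_sq hc).const_mul (Real.exp D)
  exact Integrable.fintype_prod (f := fun _ u => Real.exp (-c * u ^ 2 + D)) fun _ => h1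

lemma abs_sum_two_mul_add_le_two_mul_exp {n : ℕ} {l Λ : ℝ} (hl : |l| ≤ Λ) (y : Fin n → ℝ) :
    |∑ j, 2 * (y j + l)| ≤ 2 * Real.exp (∑ j, (|y j| + Λ)) := by
  have h1 : |∑ j, 2 * (y j + l)| ≤ 2 * ∑ j, (|y j| + Λ) := by
    rw [← Finset.mul_sum, abs_mul, abs_two]
    gcongr
    exact (Finset.abs_sum_le_sum_abs _ _).trans
      (Finset.sum_le_sum fun j _ => (abs_add_le _ _).trans (by linarith))
  linarith [Real.add_one_le_exp (∑ j, (|y j| + Λ))]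

lemma hasDerivAt_exp_neg_mul_sum_add_sq {n : ℕ} (a : ℝ) (y : Fin n → ℝ) (l : ℝ) :
    HasDerivAt (fun l => Real.exp (-a * ∑ j, (y j + l) ^ 2))
      (Real.exp (-a * ∑ j, (y j + l) ^ 2) * (-a * ∑ j, 2 * (y j + l))) l := by
  have hsum : HasDerivAt (fun l => ∑ j, (y j + l) ^ 2) (∑ j, 2 * (y j + l)) l :=
    HasDerivAt.fun_sum fun j _ => by simpa using ((hasDerivAt_id l).const_add (y j)).fun_pow 2
  exact (hsum.const_mul (-a)).exp

theorem hasDerivAt_integral_mul_exp_neg_sum_add_sq {n : ℕ} {G : (Fin n → ℝ) → ℝ}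
    (hGm : AEStronglyMeasurable G) {a b K : ℝ} (ha : 0 < a) (hab : b < a)
    (hG : ∀ y, |G y| ≤ K * Real.exp (b * ∑ j, y j ^ 2)) (l₀ : ℝ) :
    HasDerivAt (fun l => ∫ y, G y * Real.exp (-a * ∑ j, (y j + l) ^ 2))
      (∫ y, G y * Real.exp (-a * ∑ j, (y j + l₀) ^ 2) * (-a * ∑ j, 2 * (y j + l₀))) l₀ := by
  set Λ := |l₀| + 1
  set g : (Fin n → ℝ) → ℝ :=
    fun y => ∏ j, Real.exp (-((a - b) / 2) * y j ^ 2 + (Λ + (2 * a * Λ + 1) ^ 2 / (2 * (a - b))))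
  have hg : Integrable g := integrable_prod_exp_neg_mul_sq_add (by linarith) _
  have hK : 0 ≤ K := nonneg_of_mul_nonneg_left ((abs_nonneg _).trans (hG 0)) (Real.exp_pos _)
  have hΛ : ∀ l ∈ Metric.ball l₀ 1, |l| ≤ Λ := fun l hl => by
    rw [Metric.mem_ball, Real.dist_eq] at hl
    linarith [abs_sub_abs_le_abs_sub l l₀]
  -- the factor `exp (∑ j, (|y j| + Λ))` will absorb the linear factor of the derivative
  have hbound : ∀ l ∈ Metric.ball l₀ 1, ∀ y,
      |G y| * Real.exp (-a * ∑ j, (y j + l) ^ 2) * Real.exp (∑ j, (|y j| + Λ)) ≤ K * g y := by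
    intro l hl y
    calc _ ≤ K * Real.exp (b * ∑ j, y j ^ 2) * Real.exp (-a * ∑ j, (y j + l) ^ 2)
          * Real.exp (∑ j, (|y j| + Λ)) := by gcongr; exact hG y
      _ ≤ K * g y := by
        rw [mul_assoc K, mul_assoc K]
        exact mul_le_mul_of_nonneg_left (exp_mul_exp_mul_exp_le_prod ha hab (hΛ l hl) y) hK
  have hmeas : ∀ l, AEStronglyMeasurable fun y => G y * Real.exp (-a * ∑ j, (y j + l) ^ 2) :=
    fun l => hGm.mul (by fun_prop : Continuous _).aestronglyMeasurable
  refine (hasDerivAt_integral_of_dominated_loc_of_deriv_le (bound := fun y => 2 * a * (K * g y))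
    (F' := fun l y => G y * Real.exp (-a * ∑ j, (y j + l) ^ 2) * (-a * ∑ j, 2 * (y j + l)))
    (Metric.ball_mem_nhds l₀ one_pos) (Eventually.of_forall hmeas) ?_
    ((hmeas l₀).mul (by fun_prop : Continuous _).aestronglyMeasurable) ?_
    ((hg.const_mul K).const_mul (2 * a)) (Eventually.of_forall fun y l _ => ?_)).2
  · refine (hg.const_mul K).mono' (hmeas l₀) (Eventually.of_forall fun y => ?_)
    rw [Real.norm_eq_abs, abs_mul, Real.abs_exp]
    refine le_trans ?_ (hbound l₀ (Metric.mem_ball_self one_pos) y)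
    exact le_mul_of_one_le_right (by positivity)
      (Real.one_le_exp (Finset.sum_nonneg fun j _ => by positivity))
  · refine Eventually.of_forall fun y l hl => ?_
    rw [Real.norm_eq_abs, abs_mul, abs_mul, Real.abs_exp, abs_mul, abs_neg, abs_of_pos ha]
    calc _ ≤ |G y| * Real.exp (-a * ∑ j, (y j + l) ^ 2)
          * (a * (2 * Real.exp (∑ j, (|y j| + Λ)))) := by
          gcongr; exact abs_sum_two_mul_add_le_two_mul_exp (hΛ l hl) y
      _ = 2 * a * (|G y| * Real.exp (-a * ∑ j, (y j + l) ^ 2) * Real.exp (∑ j, (|y j| + Λ))) := by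
          ring
      _ ≤ 2 * a * (K * g y) := mul_le_mul_of_nonneg_left (hbound l hl y) (by positivity)
  · simpa [mul_assoc] using (hasDerivAt_exp_neg_mul_sum_add_sq a y l).const_mul (G y)

/-! ### The weight `w_n` -/

lemma Polynomial.bddBelow_range_eval_of_even {p : ℝ[X]} (hp : Even p.natDegree)
    (hlc : 0 ≤ p.leadingCoeff) : BddBelow (Set.range fun x => p.eval x) := by
  rcases Nat.eq_zero_or_pos p.natDegree with h0 | hpos
  · rw [eq_C_of_natDegree_eq_zero h0]
    simp
  have htop := p.tendsto_atTop_of_leadingCoeff_nonneg (natDegree_pos_iff_degree_pos.mp hpos) hlc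
  have hneg : (p.comp (-X)).natDegree = p.natDegree := by simp [natDegree_comp]
  have hbot : Tendsto (fun x => p.eval x) atBot atTop := by
    have := (p.comp (-X)).tendsto_atTop_of_leadingCoeff_nonneg
      (natDegree_pos_iff_degree_pos.mp (hneg ▸ hpos))
      (by rw [leadingCoeff_comp (by simp)]; simpa [hp.neg_one_pow] using hlc)
    simpa [Function.comp_def] using this.comp tendsto_neg_atBot_atTop
  obtain ⟨x₀, hx₀⟩ := p.continuous.exists_forall_le
    (by rw [cocompact_eq_atBot_atTop]; exact tendsto_sup.mpr ⟨hbot, htop⟩)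
  exact ⟨p.eval x₀, by rintro _ ⟨x, rfl⟩; exact hx₀ x⟩

lemma bddBelow_range_sum_mul_pow {m : ℕ} (hm : 1 ≤ m) {t : ℕ → ℝ} (ht : 0 < t (2 * m)) :
    BddBelow (Set.range fun v : ℝ => ∑ k ∈ Finset.Icc 1 (2 * m), t k * v ^ k) := by
  set q : ℝ[X] := ∑ k ∈ Finset.Icc 1 (2 * m), C (t k) * X ^ k
  have hcoeff : ∀ j, q.coeff j = if j ∈ Finset.Icc 1 (2 * m) then t j else 0 := by
    intro j
    simp [q]
  have hmem : 2 * m ∈ Finset.Icc 1 (2 * m) := Finset.mem_Icc.mpr ⟨by omega, le_rfl⟩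
  have hdeg : q.natDegree = 2 * m := by
    refine natDegree_eq_of_le_of_coeff_ne_zero ?_ ?_
    · rw [natDegree_le_iff_coeff_eq_zero]
      intro j hj
      simp [hcoeff, hj.not_ge]
    · rw [hcoeff, if_pos hmem]
      exact ht.ne'
  have hq := bddBelow_range_eval_of_even (p := q) (by simp [hdeg])
    (by rw [leadingCoeff, hdeg, hcoeff, if_pos hmem]; exact ht.le)
  simpa [q, eval_finsetSum] using hq

def poleWeight (m n : ℕ) (t : ℕ → ℝ) (y : ℝ) : ℝ :=
  if y = 0 then 0 else Real.exp (-(n : ℝ) * ∑ k ∈ Finset.Icc 1 (2 * m), t k * y ^ (-(k : ℤ)))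

lemma wfun_eq_exp_mul_poleWeight (m n : ℕ) (lam : ℝ) (t : ℕ → ℝ) (x : ℝ) :
    wfun m n lam t x = Real.exp (-(2 * n) * x ^ 2) * poleWeight m n t (x - lam) := by
  by_cases h : x = lam
  · simp [wfun, poleWeight, h]
  · rw [wfun, poleWeight, if_neg h, if_neg (sub_ne_zero.mpr h), ← Real.exp_add, Vpot]
    ring_nf

lemma poleWeight_nonneg (m n : ℕ) (t : ℕ → ℝ) (y : ℝ) : 0 ≤ poleWeight m n t y := by
  unfold poleWeight; split_ifs <;> positivity

lemma measurable_poleWeight (m n : ℕ) (t : ℕ → ℝ) : Measurable (poleWeight m n t) :=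
  Measurable.ite (measurableSet_singleton 0) measurable_const (by fun_prop)

lemma exists_poleWeight_le {m : ℕ} (hm : 1 ≤ m) (n : ℕ) {t : ℕ → ℝ} (ht : 0 < t (2 * m)) :
    ∃ C, ∀ y, poleWeight m n t y ≤ C := by
  obtain ⟨B, hB⟩ := bddBelow_range_sum_mul_pow hm ht
  refine ⟨Real.exp (-n * B), fun y => ?_⟩
  unfold poleWeight
  split_ifs
  · positivity
  · have hy : B ≤ ∑ k ∈ Finset.Icc 1 (2 * m), t k * y ^ (-(k : ℤ)) := by
      simpa [zpow_neg, inv_pow] using hB ⟨y⁻¹, rfl⟩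
    exact Real.exp_le_exp.mpr (mul_le_mul_of_nonpos_left hy (by simp))

lemma prod_wfun_add (m n : ℕ) (lam : ℝ) (t : ℕ → ℝ) (y : Fin n → ℝ) :
    ∏ j, wfun m n lam t (y j + lam)
      = (∏ j, poleWeight m n t (y j)) * Real.exp (-(2 * n) * ∑ j, (y j + lam) ^ 2) := by
  simp_rw [wfun_eq_exp_mul_poleWeight, add_sub_cancel_right]
  rw [Finset.prod_mul_distrib, ← Real.exp_sum, Finset.mul_sum, mul_comm]

lemma integral_mul_vandermondeSq_mul_prod_wfun (m n : ℕ) (lam : ℝ) (t : ℕ → ℝ)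
    (f : (Fin n → ℝ) → ℝ) :
    ∫ x, f x * (vandermondeSq x * ∏ j, wfun m n lam t (x j))
      = ∫ y, f (y + fun _ => lam) * ((vandermondeSq y * ∏ j, poleWeight m n t (y j))
          * Real.exp (-(2 * n) * ∑ j, (y j + lam) ^ 2)) := by
  rw [← integral_add_right_eq_self _ fun _ => lam]
  simp only [vandermondeSq_add_const, Pi.add_apply, prod_wfun_add, mul_assoc]

lemma hasDerivAt_Zn {m : ℕ} (hm : 1 ≤ m) {n : ℕ} (hn : 1 ≤ n) {t : ℕ → ℝ} (ht : 0 < t (2 * m))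
    (lam : ℝ) :
    HasDerivAt (fun l => Zn m n l t)
      (-(4 * n) * ∫ x : Fin n → ℝ, (∑ k, x k) * (vandermondeSq x * ∏ j, wfun m n lam t (x j)))
      lam := by
  obtain ⟨B, hB⟩ := exists_poleWeight_le hm n ht
  set G : (Fin n → ℝ) → ℝ := fun y => vandermondeSq y * ∏ j, poleWeight m n t (y j)
  have hZ : (fun l => Zn m n l t)
      = fun l => ∫ y, G y * Real.exp (-(2 * n) * ∑ j, (y j + l) ^ 2) := by
    ext l
    have h := integral_mul_vandermondeSq_mul_prod_wfun m n l t 1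
    simp only [Pi.one_apply, one_mul] at h
    exact h
  have hGm : AEStronglyMeasurable G :=
    (continuous_vandermondeSq.measurable.mul (Finset.measurable_prod _ fun j _ =>
      (measurable_poleWeight m n t).comp (measurable_pi_apply j))).aestronglyMeasurable
  have hG : ∀ y, |G y| ≤ 4 ^ (n * n) * B ^ n * Real.exp (n * ∑ j, y j ^ 2) := fun y => by
    have hprod : ∏ j, poleWeight m n t (y j) ≤ B ^ n := by
      simpa using Finset.prod_le_prod (s := Finset.univ) (fun j _ => poleWeight_nonneg m n t (y j))
        fun j _ => hB (y j)
    rw [abs_of_nonneg (mul_nonneg (vandermondeSq_nonneg y)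
      (Finset.prod_nonneg fun j _ => poleWeight_nonneg m n t (y j))), mul_right_comm]
    exact mul_le_mul (vandermondeSq_le y) hprod
      (Finset.prod_nonneg fun j _ => poleWeight_nonneg m n t (y j)) (by positivity)
  have hn' : (0 : ℝ) < n := by exact_mod_cast hn
  rw [hZ, integral_mul_vandermondeSq_mul_prod_wfun, ← integral_const_mul]
  refine (hasDerivAt_integral_mul_exp_neg_sum_add_sq (a := 2 * n) hGm (by positivity)
    (by linarith) hG lam).congr_deriv (integral_congr_ae (Eventually.of_forall fun y => ?_))
  simp only [G, Pi.add_apply, ← Finset.mul_sum]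
  ring

lemma wfun_nonneg (m n : ℕ) (lam : ℝ) (t : ℕ → ℝ) : 0 ≤ wfun m n lam t := fun x => by
  unfold wfun; split_ifs <;> positivity

lemma isMonicOrthogonal_of_orthoFam {m n : ℕ} {t : ℕ → ℝ} {P : ℝ → ℕ → ℝ[X]} {γ : ℝ → ℕ → ℝ}
    (hOP : orthoFam m n t P γ) (lam : ℝ) :
    IsMonicOrthogonal (wfun m n lam t) (P lam) fun j => γ lam j ^ (-2 : ℤ) :=
  ⟨hOP.1 lam, hOP.2.1 lam, fun j => (zpow_pos (hOP.2.2.1 lam j) _).ne', hOP.2.2.2 lam⟩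

/-- `λ ↦ ln Z_n(λ;t)` is differentiable on `ℝ` with
`d/dλ ln Z_n(λ;t) = 4n 𝔭_1(n;λ,t)`, where `𝔭_1(n;λ,t)` is the coefficient of `x^{n−1}`
in the monic orthogonal polynomial `π_n(·;λ,t)`. -/
theorem stmt5 (m n : ℕ) (hm : 1 ≤ m) (hn : 1 ≤ n) (t : ℕ → ℝ) (ht : 0 < t (2 * m))
    (P : ℝ → ℕ → Polynomial ℝ) (γ : ℝ → ℕ → ℝ) (hOP : orthoFam m n t P γ) :
    ∀ lam : ℝ, HasDerivAt (fun l => Real.log (Zn m n l t))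
      (4 * (n : ℝ) * (P lam n).coeff (n - 1)) lam := by
  intro lam
  have hP := isMonicOrthogonal_of_orthoFam hOP lam
  have hZ : Zn m n lam t = n ! * ∏ i : Fin n, γ lam i ^ (-2 : ℤ) :=
    hP.integral_vandermondeSq_mul_prod (wfun_nonneg m n lam t)
  have hZ0 : Zn m n lam t ≠ 0 := by
    rw [hZ]
    exact mul_ne_zero (by positivity) (Finset.prod_ne_zero_iff.mpr fun i _ => hP.ne_zero i)
  have hderiv := hasDerivAt_Zn hm hn ht lam
  rw [hP.integral_sum_mul_vandermondeSq_mul_prod (wfun_nonneg m n lam t), ← hZ] at hderiv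
  convert hderiv.log hZ0 using 1
  rw [nextCoeff_of_natDegree_pos (by rw [hP.natDegree_eq]; omega), hP.natDegree_eq]
  field_simp
end
end

section
/- Fix integers m ≥ 1, n ≥ 1 and t = (t_1,…,t_{2m}) ∈ ℝ^{2m−1}×(0,∞). Then Z_n(λ;t) → Z_n^{GUE} as λ → +∞, where Z_n^{GUE} = (2π)^{n/2}(4n)^{−n²/2} ∏_{j=1}^n j!. -/
open MeasureTheory Filter Set

noncomputable section

/-- The GUE partition function `Z_n^{GUE} = (2π)^{n/2} (4n)^{−n²/2} ∏_{j=1}^n j!`. -/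
def ZGUE (n : ℕ) : ℝ :=
  (2 * Real.pi) ^ ((n : ℝ) / 2) * (4 * (n : ℝ)) ^ (-((n : ℝ) ^ 2) / 2) *
    ∏ j ∈ Finset.Icc 1 n, (Nat.factorial j : ℝ)

/-! The singular part of the potential is a polynomial `P` in `(x - λ)⁻¹` with `P 0 = 0`; as
`λ → ∞` the weight therefore converges pointwise to `exp (-2n x²)`, and since `P` has even degree
and positive leading coefficient it is bounded below, which gives a Gaussian bound on the weight
uniform in `λ`. Dominated convergence reduces the claim to the Gaussian integral. There the
Vandermonde determinant equals `det (He_j (x_i))` for the monic Hermite polynomials `He_j`, and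
their orthogonality gives Mehta's integral `∫ Δ(x)² ∏ exp (-x_j² / 2) dx = n! ∏_{i<n} i! √(2π)`;
the substitution `x ↦ x / √(4n)` turns it into `Z_n^{GUE}`. -/

open Polynomial Real Topology
open scoped Nat

lemma integrable_pow_mul_exp_neg_mul_sq {b : ℝ} (hb : 0 < b) (k : ℕ) :
    Integrable fun x : ℝ => x ^ k * exp (-b * x ^ 2) := by
  simpa [rpow_natCast] using
    integrable_rpow_mul_exp_neg_mul_sq hb (s := k) (by linarith [k.cast_nonneg (α := ℝ)])

lemma Polynomial.integrable_eval_mul_exp_neg_mul_sq (p : ℝ[X]) {b : ℝ} (hb : 0 < b) :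
    Integrable fun x : ℝ => p.eval x * exp (-b * x ^ 2) := by
  simp_rw [eval_eq_sum_range, Finset.sum_mul, mul_assoc]
  exact integrable_finsetSum _ fun k _ => (integrable_pow_mul_exp_neg_mul_sq hb k).const_mul _

lemma Polynomial.integrable_eval_mul_eval_mul_gaussian (p q : ℝ[X]) :
    Integrable fun x : ℝ => p.eval x * (q.eval x * exp (-(1 / 2) * x ^ 2)) := by
  simpa [mul_assoc] using (p * q).integrable_eval_mul_exp_neg_mul_sq one_half_pos

def hermiteReal (n : ℕ) : ℝ[X] := (hermite n).map (Int.castRingHom ℝ)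

lemma hermiteReal_succ (n : ℕ) :
    hermiteReal (n + 1) = X * hermiteReal n - derivative (hermiteReal n) := by
  simp [hermiteReal, hermite_succ, derivative_map]

lemma hermiteReal_monic (n : ℕ) : (hermiteReal n).Monic := (hermite_monic n).map _

lemma natDegree_hermiteReal (n : ℕ) : (hermiteReal n).natDegree = n := by
  rw [hermiteReal, (hermite_monic n).natDegree_map, natDegree_hermite]

lemma coeff_hermiteReal_self (n : ℕ) : (hermiteReal n).coeff n = 1 := by
  simp [hermiteReal, coeff_hermite_self]

lemma integral_eval_mul_sub_derivative_mul_gaussian (p q : ℝ[X]) :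
    ∫ x, p.eval x * ((X * q - derivative q).eval x * exp (-(1 / 2) * x ^ 2)) =
      ∫ x, (derivative p).eval x * (q.eval x * exp (-(1 / 2) * x ^ 2)) := by
  have hv (x : ℝ) : HasDerivAt (fun y => q.eval y * exp (-(1 / 2) * y ^ 2))
      ((derivative q - X * q).eval x * exp (-(1 / 2) * x ^ 2)) x := by
    refine ((q.hasDerivAt x).fun_mul
      ((hasDerivAt_pow 2 x).const_mul (-(1 / 2))).exp).congr_deriv ?_
    simp only [eval_sub, eval_mul, eval_X]
    ring
  have key := integral_mul_deriv_eq_deriv_mul_of_integrable (fun x _ => p.hasDerivAt x)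
    (fun x _ => hv x) (p.integrable_eval_mul_eval_mul_gaussian _)
    ((derivative p).integrable_eval_mul_eval_mul_gaussian q)
    (p.integrable_eval_mul_eval_mul_gaussian q)
  rw [← neg_sub, ← neg_eq_iff_eq_neg.2 key, ← integral_neg]
  simp only [eval_neg, neg_mul, mul_neg]

lemma integral_eval_mul_hermiteReal_mul_gaussian (n : ℕ) (p : ℝ[X]) :
    ∫ x, p.eval x * ((hermiteReal n).eval x * exp (-(1 / 2) * x ^ 2)) =
      ∫ x, (derivative^[n] p).eval x * exp (-(1 / 2) * x ^ 2) := by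
  induction n generalizing p with
  | zero => simp [hermiteReal]
  | succ n ih =>
    rw [hermiteReal_succ, integral_eval_mul_sub_derivative_mul_gaussian, ih,
      Function.iterate_succ_apply]

lemma iterate_derivative_hermiteReal_self (n : ℕ) :
    derivative^[n] (hermiteReal n) = C (n ! : ℝ) := by
  have hdeg : (derivative^[n] (hermiteReal n)).natDegree ≤ 0 := by
    simpa [natDegree_hermiteReal] using natDegree_iterate_derivative (hermiteReal n) n
  rw [eq_C_of_natDegree_le_zero hdeg, coeff_iterate_derivative, zero_add,
    Nat.descFactorial_self, coeff_hermiteReal_self, nsmul_one]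

lemma integral_hermiteReal_mul_hermiteReal_mul_gaussian (a b : ℕ) :
    ∫ x, (hermiteReal a).eval x * ((hermiteReal b).eval x * exp (-(1 / 2) * x ^ 2)) =
      if a = b then a ! * √(2 * π) else 0 := by
  rcases lt_trichotomy a b with h | rfl | h
  · rw [if_neg h.ne, integral_eval_mul_hermiteReal_mul_gaussian,
      iterate_derivative_eq_zero (by rwa [natDegree_hermiteReal])]
    simp
  · rw [if_pos rfl, integral_eval_mul_hermiteReal_mul_gaussian,
      iterate_derivative_hermiteReal_self]
    simp only [eval_C]
    rw [integral_const_mul, integral_gaussian]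
    norm_num [div_div_eq_mul_div, mul_comm]
  · simp_rw [if_neg h.ne', mul_left_comm ((hermiteReal a).eval _),
      integral_eval_mul_hermiteReal_mul_gaussian,
      iterate_derivative_eq_zero (by rwa [natDegree_hermiteReal] : (hermiteReal b).natDegree < a)]
    simp

lemma two_mul_choose_two_add_self (n : ℕ) : 2 * n.choose 2 + n = n ^ 2 := by
  induction n with
  | zero => rfl
  | succ k ih => rw [Nat.choose_succ_succ', Nat.choose_one_right]; linear_combination ih

lemma sqrt_pow_eq_rpow {x : ℝ} (hx : 0 ≤ x) (k : ℕ) : √x ^ k = x ^ ((k : ℝ) / 2) := by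
  rw [rpow_div_two_eq_sqrt _ hx, rpow_natCast]

lemma prod_Icc_factorial (n : ℕ) :
    ∏ j ∈ Finset.Icc 1 n, (j ! : ℝ) = n ! * ∏ i : Fin n, ((i : ℕ) ! : ℝ) := by
  rw [Fin.prod_univ_eq_prod_range (fun i => (i ! : ℝ))]
  induction n with
  | zero => simp
  | succ k ih => rw [Finset.prod_Icc_succ_top (by omega), ih, Finset.prod_range_succ]; ring

section Vandermonde

variable {n : ℕ}

lemma prod_prod_ite_sq_eq_det_vandermonde_sq {R : Type*} [CommRing R] (x : Fin n → R) :
    (∏ i : Fin n, ∏ j : Fin n, if i < j then (x j - x i) ^ 2 else 1) =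
      (Matrix.vandermonde x).det ^ 2 := by
  simp_rw [Matrix.det_vandermonde, ← Finset.prod_pow, ← Finset.prod_filter]
  congr! 2 with i
  ext j
  simp

lemma det_vandermonde_smul {R : Type*} [CommRing R] (c : R) (v : Fin n → R) :
    (Matrix.vandermonde (c • v)).det = c ^ n.choose 2 * (Matrix.vandermonde v).det := by
  have h : Matrix.vandermonde (c • v) =
      Matrix.vandermonde v * Matrix.diagonal fun j : Fin n => c ^ (j : ℕ) := by
    ext i j
    simp [Matrix.vandermonde_apply, mul_pow, mul_comm]
  rw [h, Matrix.det_mul, Matrix.det_diagonal, Finset.prod_pow_eq_pow_sum,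
    Fin.sum_univ_eq_sum_range (fun i => i), Finset.sum_range_id, ← Nat.choose_two_right, mul_comm]

/-- Column operations turn the Vandermonde matrix into `(He_j (x_i))`, as the `He_j` are monic. -/
lemma det_vandermonde_eq_sum_perm_prod_hermiteReal (x : Fin n → ℝ) :
    (Matrix.vandermonde x).det =
      ∑ σ : Equiv.Perm (Fin n), (Equiv.Perm.sign σ : ℝ) * ∏ j, (hermiteReal (σ j)).eval (x j) := by
  rw [Matrix.det_eval_matrixOfPolynomials_eq_det_vandermonde x (fun i => hermiteReal i)
      (fun i => natDegree_hermiteReal i) (fun i => hermiteReal_monic i),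
    ← Matrix.det_transpose, Matrix.det_apply']
  rfl

end Vandermonde

section Mehta

variable {n : ℕ}

open Equiv

lemma det_vandermonde_sq_mul_gaussian_eq_sum (x : Fin n → ℝ) :
    (Matrix.vandermonde x).det ^ 2 * ∏ j, exp (-(1 / 2) * x j ^ 2) =
      ∑ σ : Perm (Fin n), ∑ τ : Perm (Fin n), (Perm.sign σ : ℝ) * Perm.sign τ *
        ∏ j, (hermiteReal (σ j)).eval (x j) *
          ((hermiteReal (τ j)).eval (x j) * exp (-(1 / 2) * x j ^ 2)) := by
  rw [sq, det_vandermonde_eq_sum_perm_prod_hermiteReal, Finset.sum_mul_sum, Finset.sum_mul]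
  refine Finset.sum_congr rfl fun σ _ => ?_
  rw [Finset.sum_mul]
  refine Finset.sum_congr rfl fun τ _ => ?_
  simp_rw [Finset.prod_mul_distrib]
  ring

lemma integrable_prod_hermiteReal_mul_gaussian (σ τ : Perm (Fin n)) :
    Integrable fun x : Fin n → ℝ => ∏ j, (hermiteReal (σ j)).eval (x j) *
        ((hermiteReal (τ j)).eval (x j) * exp (-(1 / 2) * x j ^ 2)) :=
  Integrable.fintype_prod fun j =>
    (hermiteReal (σ j)).integrable_eval_mul_eval_mul_gaussian (hermiteReal (τ j))

lemma integrable_det_vandermonde_sq_mul_gaussian :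
    Integrable fun x : Fin n → ℝ =>
      (Matrix.vandermonde x).det ^ 2 * ∏ j, exp (-(1 / 2) * x j ^ 2) := by
  simp_rw [det_vandermonde_sq_mul_gaussian_eq_sum]
  exact integrable_finsetSum _ fun σ _ => integrable_finsetSum _ fun τ _ =>
    (integrable_prod_hermiteReal_mul_gaussian σ τ).const_mul _

lemma integral_prod_hermiteReal_mul_gaussian (σ τ : Perm (Fin n)) :
    ∫ x : Fin n → ℝ, ∏ j, (hermiteReal (σ j)).eval (x j) *
        ((hermiteReal (τ j)).eval (x j) * exp (-(1 / 2) * x j ^ 2)) =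
      if σ = τ then ∏ i : Fin n, ((i : ℕ) ! * √(2 * π)) else 0 := by
  rw [volume_pi, integral_fintype_prod_eq_prod (fun j y => (hermiteReal (σ j)).eval y *
    ((hermiteReal (τ j)).eval y * exp (-(1 / 2) * y ^ 2)))]
  simp_rw [integral_hermiteReal_mul_hermiteReal_mul_gaussian, Fin.val_inj]
  split_ifs with h
  · subst h
    simpa using Equiv.prod_comp σ fun i : Fin n => ((i : ℕ) ! * √(2 * π))
  · obtain ⟨j, hj⟩ : ∃ j, σ j ≠ τ j := by
      contrapose! h
      exact Equiv.ext h
    exact Finset.prod_eq_zero (Finset.mem_univ j) (if_neg hj)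

/-- Mehta's integral for the Gaussian unitary ensemble. -/
lemma integral_det_vandermonde_sq_mul_gaussian :
    ∫ x : Fin n → ℝ, (Matrix.vandermonde x).det ^ 2 * ∏ j, exp (-(1 / 2) * x j ^ 2) =
      n ! * ∏ i : Fin n, ((i : ℕ) ! * √(2 * π)) := by
  have hint (σ τ : Perm (Fin n)) := (integrable_prod_hermiteReal_mul_gaussian σ τ).const_mul
    ((Perm.sign σ : ℝ) * Perm.sign τ)
  simp_rw [det_vandermonde_sq_mul_gaussian_eq_sum]
  rw [integral_finsetSum _ fun σ _ => integrable_finsetSum _ fun τ _ => hint σ τ]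
  simp_rw [integral_finsetSum _ fun τ _ => hint _ τ, integral_const_mul,
    integral_prod_hermiteReal_mul_gaussian, mul_ite, mul_zero, Finset.sum_ite_eq,
    Finset.mem_univ, if_true]
  have hsign (σ : Perm (Fin n)) : (Perm.sign σ : ℝ) * Perm.sign σ = 1 := by
    rw [← Int.cast_mul, ← Units.val_mul, Int.units_mul_self, Units.val_one, Int.cast_one]
  simp [hsign, Finset.card_univ, Fintype.card_perm]

lemma det_vandermonde_sq_mul_gaussian_smul (R : ℝ) (x : Fin n → ℝ) :
    (Matrix.vandermonde (R • x)).det ^ 2 * ∏ j, exp (-(1 / 2) * (R • x) j ^ 2) =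
      R ^ (2 * n.choose 2) *
        ((Matrix.vandermonde x).det ^ 2 * ∏ j, exp (-(R ^ 2 / 2) * x j ^ 2)) := by
  simp only [det_vandermonde_smul, Pi.smul_apply, smul_eq_mul]
  ring_nf

lemma det_vandermonde_sq_mul_exp_neg_mul_sq_eq {c : ℝ} (hc : 0 < c) (x : Fin n → ℝ) :
    (Matrix.vandermonde x).det ^ 2 * ∏ j, exp (-c * x j ^ 2) =
      (√(2 * c) ^ (2 * n.choose 2))⁻¹ * ((Matrix.vandermonde (√(2 * c) • x)).det ^ 2 *
        ∏ j, exp (-(1 / 2) * (√(2 * c) • x) j ^ 2)) := by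
  have hR : √(2 * c) ≠ 0 := by positivity
  rw [det_vandermonde_sq_mul_gaussian_smul, inv_mul_cancel_left₀ (pow_ne_zero _ hR),
    sq_sqrt (by positivity), mul_div_cancel_left₀ _ two_ne_zero]

lemma integrable_det_vandermonde_sq_mul_exp_neg_mul_sq {c : ℝ} (hc : 0 < c) :
    Integrable fun x : Fin n → ℝ =>
      (Matrix.vandermonde x).det ^ 2 * ∏ j, exp (-c * x j ^ 2) := by
  simp_rw [det_vandermonde_sq_mul_exp_neg_mul_sq_eq hc]
  exact (integrable_det_vandermonde_sq_mul_gaussian.comp_smul (by positivity)).const_mul _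

lemma integral_det_vandermonde_sq_mul_exp_neg_mul_sq {c : ℝ} (hc : 0 < c) :
    ∫ x : Fin n → ℝ, (Matrix.vandermonde x).det ^ 2 * ∏ j, exp (-c * x j ^ 2) =
      (2 * π) ^ ((n : ℝ) / 2) * (2 * c) ^ (-((n : ℝ) ^ 2) / 2) *
        ∏ j ∈ Finset.Icc 1 n, (j ! : ℝ) := by
  have hscale := Measure.integral_comp_smul volume (fun y : Fin n → ℝ =>
    (Matrix.vandermonde y).det ^ 2 * ∏ j, exp (-(1 / 2) * y j ^ 2)) √(2 * c)
  beta_reduce at hscale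
  simp_rw [det_vandermonde_sq_mul_exp_neg_mul_sq_eq hc]
  rw [integral_const_mul, hscale, integral_det_vandermonde_sq_mul_gaussian,
    Module.finrank_fin_fun, abs_of_pos (by positivity), smul_eq_mul, ← mul_assoc, ← mul_inv,
    ← pow_add, two_mul_choose_two_add_self, Finset.prod_mul_distrib, Finset.prod_const,
    Finset.card_univ, Fintype.card_fin, prod_Icc_factorial, sqrt_pow_eq_rpow (by positivity),
    sqrt_pow_eq_rpow (by positivity), neg_div, rpow_neg (by positivity)]
  push_cast
  ring

end Mehta

lemma Polynomial.tendsto_eval_cocompact_atTop {P : ℝ[X]} (hdeg : 0 < P.degree)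
    (heven : Even P.natDegree) (hlc : 0 < P.leadingCoeff) :
    Tendsto P.eval (cocompact ℝ) atTop := by
  rw [← Metric.cobounded_eq_cocompact]
  refine isEquivalent_cobounded_leading_monomial.symm.tendsto_atTop ?_
  refine (((tendsto_pow_atTop (natDegree_pos_iff_degree_pos.2 hdeg).ne').comp
    tendsto_norm_cobounded_atTop).const_mul_atTop hlc).congr fun x => ?_
  rw [Function.comp_apply, Real.norm_eq_abs, heven.pow_abs]

def singularPolynomial (m : ℕ) (t : ℕ → ℝ) : ℝ[X] :=
  ∑ k ∈ Finset.Icc 1 (2 * m), C (t k) * X ^ k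

section Potential

variable {m : ℕ} {t : ℕ → ℝ}

lemma Vpot_eq_add_eval_singularPolynomial (lam x : ℝ) :
    Vpot m lam t x = 2 * x ^ 2 + (singularPolynomial m t).eval (x - lam)⁻¹ := by
  simp [Vpot, singularPolynomial, eval_finsetSum, zpow_neg, inv_pow]

lemma coeff_singularPolynomial (k : ℕ) :
    (singularPolynomial m t).coeff k = if k ∈ Finset.Icc 1 (2 * m) then t k else 0 := by
  simp [singularPolynomial, finsetSum_coeff]

lemma eval_zero_singularPolynomial : (singularPolynomial m t).eval 0 = 0 := by
  simp [← coeff_zero_eq_eval_zero, coeff_singularPolynomial]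

lemma exists_forall_le_eval_singularPolynomial (hm : 1 ≤ m) (ht : 0 < t (2 * m)) :
    ∃ B, ∀ u, B ≤ (singularPolynomial m t).eval u := by
  set P := singularPolynomial m t
  have hcoeff : P.coeff (2 * m) = t (2 * m) := by
    rw [coeff_singularPolynomial, if_pos (Finset.mem_Icc.2 ⟨by omega, le_rfl⟩)]
  have hdeg : P.natDegree = 2 * m := by
    refine natDegree_eq_of_le_of_coeff_ne_zero ?_ (hcoeff ▸ ht.ne')
    refine natDegree_le_iff_coeff_eq_zero.2 fun k hk => ?_
    rw [coeff_singularPolynomial, if_neg fun h => by linarith [(Finset.mem_Icc.1 h).2]]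
  obtain ⟨u₀, hu₀⟩ := P.continuous.exists_forall_le (P.tendsto_eval_cocompact_atTop
    (natDegree_pos_iff_degree_pos.1 (by omega)) (hdeg ▸ even_two_mul m)
    (by rwa [leadingCoeff, hdeg, hcoeff]))
  exact ⟨_, hu₀⟩

end Potential

section Weight

variable (m n : ℕ) (t : ℕ → ℝ)

lemma abs_wfun_le {B : ℝ} (hB : ∀ u, B ≤ (singularPolynomial m t).eval u) (lam x : ℝ) :
    |wfun m n lam t x| ≤ exp (-n * B) * exp (-(2 * n) * x ^ 2) := by
  unfold wfun
  split_ifs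
  · rw [abs_zero]
    positivity
  · rw [abs_of_pos (exp_pos _), ← exp_add, exp_le_exp, Vpot_eq_add_eval_singularPolynomial]
    nlinarith [hB (x - lam)⁻¹, n.cast_nonneg (α := ℝ)]

lemma measurable_wfun (lam : ℝ) : Measurable (wfun m n lam t) := by
  have hV : Measurable (Vpot m lam t) := by
    simp_rw [funext (Vpot_eq_add_eval_singularPolynomial (m := m) (t := t) lam)]
    fun_prop
  exact Measurable.ite (measurableSet_singleton lam) measurable_const
    (hV.const_mul _).exp

lemma tendsto_wfun_atTop (y : ℝ) :
    Tendsto (fun lam => wfun m n lam t y) atTop (𝓝 (exp (-(2 * n) * y ^ 2))) := by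
  have hinv : Tendsto (fun lam : ℝ => (y - lam)⁻¹) atTop (𝓝 0) :=
    tendsto_inv_atBot_zero.comp (tendsto_atBot_add_const_left _ y tendsto_neg_atTop_atBot)
  have hV : Tendsto (fun lam => Vpot m lam t y) atTop (𝓝 (2 * y ^ 2)) := by
    simp_rw [Vpot_eq_add_eval_singularPolynomial]
    simpa [eval_zero_singularPolynomial] using
      (((singularPolynomial m t).continuous.tendsto 0).comp hinv).const_add (2 * y ^ 2)
  rw [show -(2 * (n : ℝ)) * y ^ 2 = -n * (2 * y ^ 2) by ring]
  refine ((continuous_exp.tendsto _).comp (hV.const_mul (-(n : ℝ)))).congr' ?_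
  filter_upwards [eventually_gt_atTop y] with lam hlam
  simp [wfun, hlam.ne]

end Weight

lemma continuous_det_vandermonde {n : ℕ} :
    Continuous fun x : Fin n → ℝ => (Matrix.vandermonde x).det := by
  simp_rw [Matrix.det_vandermonde]
  fun_prop

lemma tendsto_integral_det_vandermonde_sq_mul_prod {n : ℕ} {ι : Type*} {l : Filter ι}
    [l.IsCountablyGenerated] {w : ι → ℝ → ℝ} {g : ℝ → ℝ} {A c : ℝ} (hc : 0 < c)
    (hw : ∀ i, Measurable (w i)) (hbound : ∀ i x, |w i x| ≤ A * exp (-c * x ^ 2))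
    (hlim : ∀ x, Tendsto (fun i => w i x) l (𝓝 (g x))) :
    Tendsto (fun i => ∫ x : Fin n → ℝ, (Matrix.vandermonde x).det ^ 2 * ∏ j, w i (x j)) l
      (𝓝 (∫ x : Fin n → ℝ, (Matrix.vandermonde x).det ^ 2 * ∏ j, g (x j))) := by
  refine tendsto_integral_filter_of_dominated_convergence
    (fun x => A ^ n * ((Matrix.vandermonde x).det ^ 2 * ∏ j, exp (-c * x j ^ 2)))
    (.of_forall fun i => ?_) (.of_forall fun i => .of_forall fun x => ?_)
    ((integrable_det_vandermonde_sq_mul_exp_neg_mul_sq hc).const_mul _)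
    (.of_forall fun x => tendsto_const_nhds.mul (tendsto_finsetProd _ fun j _ => hlim (x j)))
  · exact ((continuous_det_vandermonde.pow 2).measurable.mul (Finset.measurable_prod _
      fun j _ => (hw i).comp (measurable_pi_apply j))).aestronglyMeasurable
  · have hprod : |∏ j, w i (x j)| ≤ A ^ n * ∏ j, exp (-c * x j ^ 2) := by
      rw [Finset.abs_prod, ← Fin.prod_const, ← Finset.prod_mul_distrib]
      exact Finset.prod_le_prod (fun j _ => abs_nonneg _) fun j _ => hbound i (x j)
    rw [Real.norm_eq_abs, abs_mul, abs_of_nonneg (sq_nonneg _), mul_left_comm]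
    exact mul_le_mul_of_nonneg_left hprod (sq_nonneg _)

/-- For fixed `m, n ≥ 1` and `t ∈ ℝ^{2m−1}×(0,∞)`, the partition
function satisfies `Z_n(λ;t) → Z_n^{GUE}` as `λ → +∞`. -/
theorem stmt18 (m n : ℕ) (hm : 1 ≤ m) (hn : 1 ≤ n) (t : ℕ → ℝ) (ht : 0 < t (2 * m)) :
    Tendsto (fun lam : ℝ => Zn m n lam t) atTop (nhds (ZGUE n)) := by
  obtain ⟨B, hB⟩ := exists_forall_le_eval_singularPolynomial hm ht
  have hc : (0 : ℝ) < 2 * n := by positivity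
  have key := tendsto_integral_det_vandermonde_sq_mul_prod (n := n) hc (measurable_wfun m n t)
    (abs_wfun_le m n t hB) (tendsto_wfun_atTop m n t)
  rw [integral_det_vandermonde_sq_mul_exp_neg_mul_sq hc, ← mul_assoc,
    show (2 : ℝ) * 2 = 4 by norm_num] at key
  simpa only [Zn, ZGUE, prod_prod_ite_sq_eq_det_vandermonde_sq] using key

end
end
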